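/- For sl₂(ℂ) and λ ∈ ℤ≥0, the maximal proper submodule of the Verma module M_λ is isomorphic to M_{−λ−2}, and the quotient L_λ = M_λ/M_{−λ−2} is the (λ+1)-dimensional irreducible representation. -/

import Mathlib

/-! The Verma module `M_λ` for `sl₂(ℂ)` in its concrete realization: underlying space
`ℕ →₀ ℂ` with basis `(fⁿv)_{n ≥ 0}`, where `f` acts by the shift `fⁿv ↦ f^{n+1}v`,
`h · fⁿv = (λ − 2n) fⁿv` and `e · fⁿv = n(λ − n + 1) f^{n−1}v`. -/

/-- The action of `f` on `M_λ`. -/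
noncomputable def vermaF : (ℕ →₀ ℂ) →ₗ[ℂ] (ℕ →₀ ℂ) :=
  Finsupp.lsum ℂ fun n => LinearMap.toSpanSingleton ℂ (ℕ →₀ ℂ) (Finsupp.single (n + 1) 1)

/-- The action of `e` on `M_λ`. -/
noncomputable def vermaE (lam : ℂ) : (ℕ →₀ ℂ) →ₗ[ℂ] (ℕ →₀ ℂ) :=
  Finsupp.lsum ℂ fun n => LinearMap.toSpanSingleton ℂ (ℕ →₀ ℂ)
    (((n : ℂ) * (lam - n + 1)) • Finsupp.single (n - 1) 1)

/-- The action of `h` on `M_λ`. -/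
noncomputable def vermaH (lam : ℂ) : (ℕ →₀ ℂ) →ₗ[ℂ] (ℕ →₀ ℂ) :=
  Finsupp.lsum ℂ fun n => LinearMap.toSpanSingleton ℂ (ℕ →₀ ℂ)
    ((lam - 2 * n) • Finsupp.single n 1)

/-- A subspace of `M_λ` invariant under the `sl₂`-action. -/
def sl2Invariant (lam : ℂ) (N : Submodule ℂ (ℕ →₀ ℂ)) : Prop :=
  ∀ x ∈ N, vermaE lam x ∈ N ∧ vermaF x ∈ N ∧ vermaH lam x ∈ N

/-- The subspace of `M_m` spanned by `fⁿv` for `n ≥ m + 1`, i.e. the vectors whose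
coefficients at `fⁿv` vanish for all `n ≤ m`. -/
noncomputable def lowVanish (m : ℕ) : Submodule ℂ (ℕ →₀ ℂ) where
  carrier := {x | ∀ n ≤ m, x n = 0}
  zero_mem' := fun n _ => rfl
  add_mem' := fun {a b} ha hb n hn => by simp [Finsupp.add_apply, ha n hn, hb n hn]
  smul_mem' := fun c x hx n hn => by simp [Finsupp.smul_apply, hx n hn]

lemma vermaF_single (k : ℕ) (c : ℂ) : vermaF (Finsupp.single k c) = Finsupp.single (k+1) c := by
  simp [vermaF, Finsupp.smul_single]

lemma vermaE_single (lam : ℂ) (k : ℕ) (c : ℂ) :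
    vermaE lam (Finsupp.single k c) = Finsupp.single (k-1) (c * ((k:ℂ) * (lam - k + 1))) := by
  simp only [vermaE, Finsupp.lsum_single, LinearMap.toSpanSingleton_apply, smul_smul,
    Finsupp.smul_single, smul_eq_mul, mul_one]

lemma vermaH_single (lam : ℂ) (k : ℕ) (c : ℂ) :
    vermaH lam (Finsupp.single k c) = Finsupp.single k (c * (lam - 2*k)) := by
  simp only [vermaH, Finsupp.lsum_single, LinearMap.toSpanSingleton_apply, smul_smul,
    Finsupp.smul_single, smul_eq_mul, mul_one]

lemma vermaF_apply (x : ℕ →₀ ℂ) (n : ℕ) :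
    vermaF x n = if n = 0 then 0 else x (n-1) := by
  induction x using Finsupp.induction_linear with
  | zero => simp
  | add a b ha hb => rw [map_add]; simp only [Finsupp.add_apply, ha, hb]; split <;> simp
  | single k c =>
    rw [vermaF_single]
    rcases Nat.eq_zero_or_pos n with h | h
    · subst h; simp
    · simp only [Finsupp.single_apply, if_neg (by omega : ¬ n = 0)]
      split_ifs with h1 h2 h2 <;> first | rfl | omega

lemma vermaH_apply (lam : ℂ) (x : ℕ →₀ ℂ) (n : ℕ) :
    vermaH lam x n = (lam - 2*n) * x n := by
  induction x using Finsupp.induction_linear with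
  | zero => simp
  | add a b ha hb => rw [map_add]; simp only [Finsupp.add_apply, ha, hb]; ring
  | single k c =>
    rw [vermaH_single]
    simp only [Finsupp.single_apply]
    split_ifs with h1
    · subst h1; ring
    · ring

lemma vermaE_apply (lam : ℂ) (x : ℕ →₀ ℂ) (n : ℕ) :
    vermaE lam x n = ((n:ℂ)+1) * (lam - n) * x (n+1) := by
  induction x using Finsupp.induction_linear with
  | zero => simp
  | add a b ha hb => rw [map_add]; simp only [Finsupp.add_apply, ha, hb]; ring
  | single k c =>
    rw [vermaE_single]
    simp only [Finsupp.single_apply]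
    rcases Nat.eq_zero_or_pos k with h | h
    · subst h; simp
    · split_ifs with h1 h2 h2
      · have : k = n + 1 := by omega
        subst this
        push_cast; ring
      · omega
      · omega
      · ring

/-- Extraction of `h`-eigencomponents. -/
lemma single_coeff_mem (lam : ℂ) (N : Submodule ℂ (ℕ →₀ ℂ)) (hN : sl2Invariant lam N) :
    ∀ x ∈ N, ∀ n, Finsupp.single n (x n) ∈ N := by
  suffices H : ∀ c, ∀ x ∈ N, x.support.card = c → ∀ n, Finsupp.single n (x n) ∈ N by
    exact fun x hx n => H _ x hx rfl n
  intro c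
  induction c using Nat.strong_induction_on with
  | _ c ih =>
  intro x hx hc n
  by_cases hxn : x n = 0
  · rw [hxn, Finsupp.single_zero]; exact N.zero_mem
  by_cases hsub : x.support ⊆ {n}
  · have hx' : x = Finsupp.single n (x n) := by
      ext k
      rw [Finsupp.single_apply]
      split_ifs with h
      · subst h; rfl
      · by_contra hk
        have := hsub (Finsupp.mem_support_iff.mpr hk)
        simp at this; omega
    rwa [← hx']
  · rw [Finset.not_subset] at hsub
    obtain ⟨n₁, hn₁s, hn₁⟩ := hsub
    simp only [Finset.mem_singleton] at hn₁
    rw [Finsupp.mem_support_iff] at hn₁s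
    set y : ℕ →₀ ℂ := vermaH lam x - (lam - 2*n₁) • x with hy
    have hyN : y ∈ N := N.sub_mem (hN x hx).2.2 (N.smul_mem _ hx)
    have hyapp : ∀ k, y k = (2*(n₁:ℂ) - 2*k) * x k := by
      intro k
      simp [hy, Finsupp.sub_apply, vermaH_apply]
      ring
    have hysupp : y.support ⊆ x.support.erase n₁ := by
      intro k hk
      rw [Finsupp.mem_support_iff, hyapp] at hk
      rw [Finset.mem_erase, Finsupp.mem_support_iff]
      constructor
      · rintro rfl; exact hk (by ring)
      · intro h; exact hk (by rw [h, mul_zero])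
    have hcard : y.support.card < c := by
      calc y.support.card ≤ (x.support.erase n₁).card := Finset.card_le_card hysupp
        _ < x.support.card := Finset.card_erase_lt_of_mem (Finsupp.mem_support_iff.mpr hn₁s)
        _ = c := hc
    have h1 : Finsupp.single n (y n) ∈ N := ih _ hcard y hyN rfl n
    have hne : (2*(n₁:ℂ) - 2*n) ≠ 0 := by
      intro h
      have : (n₁:ℂ) = n := by linear_combination h/2
      exact hn₁ (Nat.cast_injective this)
    have := N.smul_mem (2*(n₁:ℂ) - 2*n)⁻¹ h1
    rwa [Finsupp.smul_single, hyapp, smul_eq_mul, ← mul_assoc, inv_mul_cancel₀ hne, one_mul] at this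

lemma single_one_mem (N : Submodule ℂ (ℕ →₀ ℂ)) (k : ℕ) (c : ℂ) (hc : c ≠ 0)
    (h : Finsupp.single k c ∈ N) : Finsupp.single k (1:ℂ) ∈ N := by
  have := N.smul_mem c⁻¹ h
  rwa [Finsupp.smul_single, smul_eq_mul, inv_mul_cancel₀ hc] at this

lemma eq_top_of_low (m : ℕ) (N : Submodule ℂ (ℕ →₀ ℂ)) (hN : sl2Invariant (m:ℂ) N)
    (x : ℕ →₀ ℂ) (hx : x ∈ N) (n : ℕ) (hn : n ≤ m) (hxn : x n ≠ 0) : N = ⊤ := by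
  have h1 : Finsupp.single n (1:ℂ) ∈ N :=
    single_one_mem N n _ hxn (single_coeff_mem _ _ hN x hx n)
  -- descend to single 0 1
  have hdown : ∀ k, k ≤ m → Finsupp.single k (1:ℂ) ∈ N → Finsupp.single 0 (1:ℂ) ∈ N := by
    intro k
    induction k with
    | zero => exact fun _ h => h
    | succ k ih =>
      intro hk hmem
      have hE := (hN _ hmem).1
      rw [vermaE_single, one_mul, Nat.add_sub_cancel] at hE
      refine ih (by omega) (single_one_mem N k _ (mul_ne_zero ?_ ?_) hE)
      · exact_mod_cast (by omega : (k+1:ℕ) ≠ 0)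
      · have : ((m:ℂ) - ((k+1:ℕ):ℂ) + 1) = ((m - k : ℕ) : ℂ) := by
          push_cast [Nat.cast_sub (by omega : k ≤ m)]
          ring
        rw [this]
        exact_mod_cast (by omega : m - k ≠ 0)
  have h0 : Finsupp.single 0 (1:ℂ) ∈ N := hdown n hn h1
  -- ascend to all singles
  have hup : ∀ k, Finsupp.single k (1:ℂ) ∈ N := by
    intro k
    induction k with
    | zero => exact h0
    | succ k ih =>
      have := (hN _ ih).2.1
      rwa [vermaF_single] at this
  rw [eq_top_iff]
  intro y hy
  clear hy
  induction y using Finsupp.induction_linear with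
  | zero => exact N.zero_mem
  | add a b ha hb => exact N.add_mem ha hb
  | single k c =>
    have := N.smul_mem c (hup k)
    rwa [Finsupp.smul_single, smul_eq_mul, mul_one] at this

noncomputable def shiftMap (m : ℕ) : (ℕ →₀ ℂ) →ₗ[ℂ] (ℕ →₀ ℂ) :=
  Finsupp.lmapDomain ℂ ℂ (· + (m+1))

lemma shift_inj (m : ℕ) : Function.Injective (· + (m+1) : ℕ → ℕ) :=
  add_left_injective (m+1)

lemma shiftMap_apply (m : ℕ) (x : ℕ →₀ ℂ) (n : ℕ) :
    shiftMap m x n = if m+1 ≤ n then x (n - (m+1)) else 0 := by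
  unfold shiftMap
  rw [Finsupp.lmapDomain_apply]
  split_ifs with h
  · have : n = (n - (m+1)) + (m+1) := by omega
    rw [this, Finsupp.mapDomain_apply (shift_inj m)]
    congr 1
    omega
  · rw [Finsupp.mapDomain_notin_range]
    rintro ⟨a, ha⟩
    simp at ha; omega

lemma shiftMap_E (m : ℕ) (x : ℕ →₀ ℂ) :
    shiftMap m (vermaE (-(m:ℂ)-2) x) = vermaE (m:ℂ) (shiftMap m x) := by
  ext n
  rw [shiftMap_apply, vermaE_apply]
  split_ifs with h
  · rw [vermaE_apply, shiftMap_apply, if_pos (by omega)]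
    have h1 : ((n - (m+1) : ℕ) : ℂ) = (n:ℂ) - m - 1 := by
      rw [Nat.cast_sub h]; push_cast; ring
    have h2 : n - (m+1) + 1 = n + 1 - (m+1) := by omega
    rw [h1, h2]; ring
  · rw [vermaE_apply, shiftMap_apply]
    by_cases h2 : m+1 ≤ n+1
    · have : n = m := by omega
      subst this
      simp
    · rw [if_neg h2]; ring

lemma shiftMap_F (m : ℕ) (x : ℕ →₀ ℂ) :
    shiftMap m (vermaF x) = vermaF (shiftMap m x) := by
  ext n
  simp only [shiftMap_apply, vermaF_apply]
  split_ifs <;> first | rfl | omega | (congr 1; omega)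

lemma shiftMap_H (m : ℕ) (x : ℕ →₀ ℂ) :
    shiftMap m (vermaH (-(m:ℂ)-2) x) = vermaH (m:ℂ) (shiftMap m x) := by
  ext n
  rw [shiftMap_apply, vermaH_apply, vermaH_apply, shiftMap_apply]
  split_ifs with h
  · rw [Nat.cast_sub h]; push_cast; ring
  · ring

lemma shiftMap_range (m : ℕ) : LinearMap.range (shiftMap m) = lowVanish m := by
  ext x
  constructor
  · rintro ⟨y, rfl⟩ n hn
    rw [shiftMap_apply, if_neg (by omega)]
  · intro hx
    refine ⟨Finsupp.comapDomain _ x ((shift_inj m).injOn), ?_⟩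
    show Finsupp.mapDomain _ _ = x
    apply Finsupp.mapDomain_comapDomain _ (shift_inj m)
    intro n hn
    have h : x n ≠ 0 := by simpa using hn
    by_cases h2 : m+1 ≤ n
    · exact ⟨n - (m+1), by show n - (m+1) + (m+1) = n; omega⟩
    · exact absurd (hx n (by omega)) h

noncomputable def shiftEquiv (m : ℕ) : (ℕ →₀ ℂ) ≃ₗ[ℂ] lowVanish m :=
  (LinearEquiv.ofInjective (shiftMap m) (Finsupp.mapDomain_injective (shift_inj m))).trans
    (LinearEquiv.ofEq _ _ (shiftMap_range m))

lemma shiftEquiv_coe (m : ℕ) (x : ℕ →₀ ℂ) : (shiftEquiv m x : ℕ →₀ ℂ) = shiftMap m x := by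
  unfold shiftEquiv
  rw [LinearEquiv.trans_apply, LinearEquiv.coe_ofEq_apply]
  rfl

noncomputable def lowProj (m : ℕ) : (ℕ →₀ ℂ) →ₗ[ℂ] (Fin (m+1) → ℂ) :=
  LinearMap.pi (fun i => Finsupp.lapply (i:ℕ))

lemma lowProj_ker (m : ℕ) : LinearMap.ker (lowProj m) = lowVanish m := by
  ext x
  simp only [LinearMap.mem_ker, lowProj]
  constructor
  · intro h n hn
    have := congrFun h ⟨n, by omega⟩
    simpa using this
  · intro h
    funext i
    simpa using h i (by omega)

lemma lowProj_surj (m : ℕ) : Function.Surjective (lowProj m) := by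
  intro f
  refine ⟨∑ j : Fin (m+1), Finsupp.single (j:ℕ) (f j), ?_⟩
  funext i
  show (∑ j : Fin (m+1), Finsupp.single (j:ℕ) (f j)) (i:ℕ) = f i
  rw [Finsupp.finset_sum_apply]
  simp [Finsupp.single_apply, Fin.val_eq_val]

lemma finrank_quot (m : ℕ) : Module.finrank ℂ ((ℕ →₀ ℂ) ⧸ lowVanish m) = m + 1 := by
  have e : ((ℕ →₀ ℂ) ⧸ lowVanish m) ≃ₗ[ℂ] (Fin (m+1) → ℂ) :=
    (Submodule.quotEquivOfEq _ _ (lowProj_ker m).symm).trans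
      (LinearMap.quotKerEquivOfSurjective _ (lowProj_surj m))
  rw [e.finrank_eq]
  simp

lemma mem_lowVanish {m : ℕ} {x : ℕ →₀ ℂ} : x ∈ lowVanish m ↔ ∀ n ≤ m, x n = 0 := Iff.rfl

lemma max_sub (m : ℕ) (N : Submodule ℂ (ℕ →₀ ℂ)) (hN : sl2Invariant (m:ℂ) N)
    (hNtop : N ≠ ⊤) : N ≤ lowVanish m := by
  intro x hx
  rw [mem_lowVanish]
  intro n hn
  by_contra hxn
  exact hNtop (eq_top_of_low m N hN x hx n hn hxn)

/-- For `sl₂(ℂ)` and `λ = m ∈ ℤ≥0`, the maximal proper submodule of the Verma module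
`M_m` is (spanned by `fⁿv`, `n ≥ m+1`, and is) isomorphic to the Verma module `M_{−m−2}`,
and the quotient `L_m = M_m / M_{−m−2}` is the `(m+1)`-dimensional irreducible
representation. -/
theorem stmt11 (m : ℕ) :
    -- `lowVanish m` is a proper `sl₂`-submodule of `M_m`,
    sl2Invariant (m : ℂ) (lowVanish m) ∧ lowVanish m ≠ ⊤ ∧
    -- and it is the maximal proper submodule:
    (∀ N : Submodule ℂ (ℕ →₀ ℂ), sl2Invariant (m : ℂ) N → N ≠ ⊤ → N ≤ lowVanish m) ∧
    -- it is isomorphic to the Verma module `M_{−m−2}` as an `sl₂`-module: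
    (∃ φ : (ℕ →₀ ℂ) ≃ₗ[ℂ] lowVanish m, ∀ x : ℕ →₀ ℂ,
      ((φ (vermaE (-(m : ℂ) - 2) x) : ℕ →₀ ℂ) = vermaE (m : ℂ) (φ x)) ∧
      ((φ (vermaF x) : ℕ →₀ ℂ) = vermaF (φ x)) ∧
      ((φ (vermaH (-(m : ℂ) - 2) x) : ℕ →₀ ℂ) = vermaH (m : ℂ) (φ x))) ∧
    -- the quotient has dimension `m + 1`:
    Module.finrank ℂ ((ℕ →₀ ℂ) ⧸ lowVanish m) = m + 1 ∧
    -- and the quotient is irreducible (no intermediate invariant submodules):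
    (∀ N : Submodule ℂ (ℕ →₀ ℂ), sl2Invariant (m : ℂ) N → lowVanish m ≤ N →
      N = lowVanish m ∨ N = ⊤) := by
  
  refine ⟨?_, ?_, fun N hN hNtop => max_sub m N hN hNtop, ?_, finrank_quot m, ?_⟩
  · -- invariance
    intro x hx
    rw [mem_lowVanish] at hx
    refine ⟨?_, ?_, ?_⟩ <;> rw [mem_lowVanish] <;> intro n hn
    · rw [vermaE_apply]
      by_cases h : n = m
      · subst h; simp
      · rw [hx (n+1) (by omega), mul_zero]
    · rw [vermaF_apply]
      split_ifs with h
      · rfl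
      · exact hx (n-1) (by omega)
    · rw [vermaH_apply, hx n hn, mul_zero]
  · -- proper
    intro h
    have h1 : Finsupp.single 0 (1:ℂ) ∈ lowVanish m := by rw [h]; trivial
    have := mem_lowVanish.mp h1 0 (Nat.zero_le m)
    simp at this
  · -- isomorphism
    refine ⟨shiftEquiv m, fun x => ⟨?_, ?_, ?_⟩⟩
    · rw [shiftEquiv_coe, shiftEquiv_coe, shiftMap_E]
    · rw [shiftEquiv_coe, shiftEquiv_coe, shiftMap_F]
    · rw [shiftEquiv_coe, shiftEquiv_coe, shiftMap_H]
  · -- irreducibility of quotient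
    intro N hN hle
    by_cases ht : N = ⊤
    · exact Or.inr ht
    · exact Or.inl (le_antisymm (max_sub m N hN ht) hle)
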